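/- (Theorem 1 (ii), (a)⇔(d).) Let n ≥ 2, 2 ≤ p ≤ ∞, Ω ⊆ ℝⁿ open and u ∈ C²(Ω). Then the following are equivalent: (a) for every a ∈ ℝⁿ, the function x ↦ u(x) + aᵀx satisfies Δ_p[u + aᵀx] ≤ 0 at every point of Ω; (d) D_p u ≤ 0 at every point of Ω. -/

import Mathlib

open scoped ENNReal
open Filter Matrix

noncomputable section

/-- Hessian matrix of `u` at `x` (entries are second partial derivatives). -/
def hess {n : ℕ} (u : EuclideanSpace ℝ (Fin n) → ℝ) (x : EuclideanSpace ℝ (Fin n)) :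
    Matrix (Fin n) (Fin n) ℝ :=
  Matrix.of fun i j =>
    iteratedFDeriv ℝ 2 u x ![EuclideanSpace.single i 1, EuclideanSpace.single j 1]

/-- Laplacian: trace of the Hessian. -/
def lapl {n : ℕ} (u : EuclideanSpace ℝ (Fin n) → ℝ) (x : EuclideanSpace ℝ (Fin n)) : ℝ :=
  ∑ i, hess u x i i

/-- Quadratic form `zᵀ A z`. -/
def quadForm {n : ℕ} (A : Matrix (Fin n) (Fin n) ℝ) (z : EuclideanSpace ℝ (Fin n)) : ℝ :=
  ∑ i, ∑ j, z i * A i j * z j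

/-- Largest eigenvalue of a (symmetric) matrix: the max of `zᵀAz` over unit vectors `z`. -/
def lamMax {n : ℕ} (A : Matrix (Fin n) (Fin n) ℝ) : ℝ :=
  sSup {r : ℝ | ∃ z : EuclideanSpace ℝ (Fin n), ‖z‖ = 1 ∧ r = quadForm A z}

open Classical in
/-- Dominative p-Laplacian `D_p u(x)`, for `2 ≤ p ≤ ∞`. -/
def Dop {n : ℕ} (p : ℝ≥0∞) (u : EuclideanSpace ℝ (Fin n) → ℝ)
    (x : EuclideanSpace ℝ (Fin n)) : ℝ :=
  if p = ⊤ then lamMax (hess u x)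
  else (p.toReal - 2) * lamMax (hess u x) + lapl u x

open Classical in
/-- p-Laplacian `Δ_p u(x)` (the `∞`-Laplacian `∇u H u ∇uᵀ` for `p = ∞`).
For finite `p`, `Δ_p u = |∇u|^{p-2} Δu + (p-2)|∇u|^{p-4} ∇u Hu ∇uᵀ` with real powers,
which is automatically `0` at critical points when `p > 2` and `Δu` when `p = 2`. -/
def DeltaOp {n : ℕ} (p : ℝ≥0∞) (u : EuclideanSpace ℝ (Fin n) → ℝ)
    (x : EuclideanSpace ℝ (Fin n)) : ℝ :=
  if p = ⊤ then quadForm (hess u x) (gradient u x)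
  else ‖gradient u x‖ ^ (p.toReal - 2) * lapl u x
    + (p.toReal - 2) * ‖gradient u x‖ ^ (p.toReal - 4) * quadForm (hess u x) (gradient u x)

open Classical in
/-- Radial profile `W_{k,p}` of the fundamental solution of the p-Laplace equation in ℝᵏ. -/
def Wfun (p : ℝ≥0∞) (k : ℕ) (r : ℝ) : ℝ :=
  if p = ⊤ ∨ k = 1 then -r
  else if p.toReal = k then -Real.log r
  else -((p.toReal - 1) / (p.toReal - k)) * r ^ ((p.toReal - k) / (p.toReal - 1))

/-- Euclidean norm of a plain vector in `Fin k → ℝ`. -/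
def enorm' {k : ℕ} (v : Fin k → ℝ) : ℝ := Real.sqrt (∑ i, v i ^ 2)

/-- `u : Ω → (-∞,∞]` is a viscosity supersolution of `G(∇u, Hu) = 0` on `Ω`:
lower semicontinuous, `> -∞`, finite on a dense subset of `Ω`, and every `C²`
test function `φ` touching `u` from below at `x₀ ∈ Ω` satisfies `G φ x₀ ≤ 0`. -/
def ViscSupersol {n : ℕ}
    (G : (EuclideanSpace ℝ (Fin n) → ℝ) → EuclideanSpace ℝ (Fin n) → ℝ)
    (Ω : Set (EuclideanSpace ℝ (Fin n))) (u : EuclideanSpace ℝ (Fin n) → EReal) : Prop :=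
  LowerSemicontinuousOn u Ω ∧
  (∀ x ∈ Ω, u x ≠ ⊥) ∧
  Ω ⊆ closure {x | x ∈ Ω ∧ u x ≠ ⊤} ∧
  ∀ x₀ ∈ Ω, ∀ φ : EuclideanSpace ℝ (Fin n) → ℝ,
    ContDiffAt ℝ 2 φ x₀ → (φ x₀ : EReal) = u x₀ →
    (∀ᶠ x in nhdsWithin x₀ Ω, (φ x : EReal) ≤ u x) → G φ x₀ ≤ 0

open Classical in
/-- EReal-valued fundamental solution `w_{m,p}` on ℝᵐ, equal to `⊤` at the pole when `p ≤ m`,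
`p ≠ ∞`. -/
def wEReal (p : ℝ≥0∞) (m : ℕ) (x : EuclideanSpace ℝ (Fin m)) : EReal :=
  if x = 0 ∧ p ≤ (m : ℝ≥0∞) ∧ p ≠ ⊤ then (⊤ : EReal)
  else ((Wfun p m ‖x‖ : ℝ) : EReal)

end

/-! At a point, `Δ_p` and `D_p` see `u` only through `g = ∇u(x)` and `A = Hu(x)`, and adding
the linear function `aᵀy` moves the gradient to `g + a` without changing the Hessian; so (a) says
that `Δ_p` is nonpositive at the Hessian `A` for *every* gradient. For `g ≠ 0` and finite `p`,
`Δ_p = |g|^{p-2} (tr A + (p-2) zᵀAz)` with `z = g / |g|` (for `p = ∞` it is `|g|² zᵀAz`), and the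
supremum of the bracket over unit vectors `z` is `(p-2) λ_max(A) + tr A = D_p`. -/

section

variable {n : ℕ}

local notation "E" => EuclideanSpace ℝ (Fin n)

lemma norm_inv_norm_smul {g : E} (hg : g ≠ 0) : ‖‖g‖⁻¹ • g‖ = 1 :=
  norm_smul_inv_norm hg

section QuadForm

variable (A : Matrix (Fin n) (Fin n) ℝ)

lemma quadForm_smul (c : ℝ) (z : E) : quadForm A (c • z) = c ^ 2 * quadForm A z := by
  simp only [quadForm, PiLp.smul_apply, smul_eq_mul, Finset.mul_sum]
  exact Finset.sum_congr rfl fun i _ => Finset.sum_congr rfl fun j _ => by ring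

lemma quadForm_eq_norm_sq_mul (g : E) : quadForm A g = ‖g‖ ^ 2 * quadForm A (‖g‖⁻¹ • g) := by
  rcases eq_or_ne g 0 with rfl | hg
  · simp [quadForm]
  · rw [quadForm_smul, ← mul_assoc, inv_pow,
      mul_inv_cancel₀ (pow_ne_zero 2 (norm_ne_zero_iff.2 hg)), one_mul]

lemma continuous_quadForm : Continuous (quadForm A) := by
  unfold quadForm
  fun_prop

lemma bddAbove_quadForm_sphere :
    BddAbove {r : ℝ | ∃ z : E, ‖z‖ = 1 ∧ r = quadForm A z} :=
  ((isCompact_sphere (0 : E) 1).bddAbove_image (continuous_quadForm A).continuousOn).mono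
    (by rintro _ ⟨z, hz, rfl⟩; exact ⟨z, by simpa using hz, rfl⟩)

lemma quadForm_le_lamMax {z : E} (hz : ‖z‖ = 1) : quadForm A z ≤ lamMax A :=
  le_csSup (bddAbove_quadForm_sphere A) ⟨z, hz, rfl⟩

lemma quadForm_le_lamMax_mul_norm_sq (g : E) : quadForm A g ≤ lamMax A * ‖g‖ ^ 2 := by
  rcases eq_or_ne g 0 with rfl | hg
  · simp [quadForm]
  · rw [quadForm_eq_norm_sq_mul A g, mul_comm (lamMax A)]
    gcongr
    exact quadForm_le_lamMax A (norm_inv_norm_smul hg)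

lemma mul_lamMax_le (hn : 0 < n) {b c : ℝ} (hc : 0 ≤ c)
    (h : ∀ z : E, ‖z‖ = 1 → c * quadForm A z ≤ b) : c * lamMax A ≤ b := by
  have he : ‖(EuclideanSpace.single ⟨0, hn⟩ 1 : E)‖ = 1 := by simp
  rcases hc.eq_or_lt with rfl | hc
  · simpa using h _ he
  · rw [← le_div_iff₀' hc]
    exact csSup_le ⟨_, _, he, rfl⟩ fun r ⟨z, hz, hr⟩ => hr ▸ (le_div_iff₀' hc).2 (h z hz)

end QuadForm

section Forms

noncomputable def pLaplacianForm (p : ℝ≥0∞) (A : Matrix (Fin n) (Fin n) ℝ) (g : E) : ℝ :=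
  if p = ⊤ then quadForm A g
  else ‖g‖ ^ (p.toReal - 2) * A.trace + (p.toReal - 2) * ‖g‖ ^ (p.toReal - 4) * quadForm A g

noncomputable def dominativeForm (p : ℝ≥0∞) (A : Matrix (Fin n) (Fin n) ℝ) : ℝ :=
  if p = ⊤ then lamMax A else (p.toReal - 2) * lamMax A + A.trace

lemma DeltaOp_eq_pLaplacianForm (p : ℝ≥0∞) (u : E → ℝ) (x : E) :
    DeltaOp p u x = pLaplacianForm p (hess u x) (gradient u x) := rfl

lemma Dop_eq_dominativeForm (p : ℝ≥0∞) (u : E → ℝ) (x : E) :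
    Dop p u x = dominativeForm p (hess u x) := rfl

variable {p : ℝ≥0∞} (A : Matrix (Fin n) (Fin n) ℝ)

lemma pLaplacianForm_of_norm_eq_one (hp : p ≠ ⊤) {z : E} (hz : ‖z‖ = 1) :
    pLaplacianForm p A z = A.trace + (p.toReal - 2) * quadForm A z := by
  simp [pLaplacianForm, hp, hz]

lemma pLaplacianForm_eq_rpow_mul (hp : p ≠ ⊤) {g : E} (hg : g ≠ 0) :
    pLaplacianForm p A g = ‖g‖ ^ (p.toReal - 2) * pLaplacianForm p A (‖g‖⁻¹ • g) := by
  have hpos : 0 < ‖g‖ := norm_pos_iff.2 hg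
  have hpow : ‖g‖ ^ (p.toReal - 4) * ‖g‖ ^ 2 = ‖g‖ ^ (p.toReal - 2) := by
    rw [← Real.rpow_natCast, ← Real.rpow_add hpos]
    congr 1
    push_cast
    ring
  rw [pLaplacianForm_of_norm_eq_one A hp (norm_inv_norm_smul hg), pLaplacianForm, if_neg hp,
    quadForm_eq_norm_sq_mul A g, ← hpow]
  ring

lemma pLaplacianForm_zero (hp : p ≠ ⊤) :
    pLaplacianForm p A (0 : E) = (0 : ℝ) ^ (p.toReal - 2) * A.trace := by
  simp [pLaplacianForm, hp, quadForm]

lemma pLaplacianForm_nonpos (hp : 2 ≤ p) (hA : dominativeForm p A ≤ 0) (g : E) :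
    pLaplacianForm p A g ≤ 0 := by
  rcases eq_or_ne p ⊤ with rfl | hp_top
  · simp only [pLaplacianForm, dominativeForm, if_true] at hA ⊢
    exact (quadForm_le_lamMax_mul_norm_sq A g).trans
      (mul_nonpos_of_nonpos_of_nonneg hA (sq_nonneg _))
  have hq : 2 ≤ p.toReal := by simpa using ENNReal.toReal_mono hp_top hp
  rw [dominativeForm, if_neg hp_top] at hA
  rcases eq_or_ne g 0 with rfl | hg
  · rw [pLaplacianForm_zero A hp_top]
    rcases hq.eq_or_lt with hq | hq
    · simpa [← hq] using hA
    · simp [Real.zero_rpow (sub_ne_zero.2 hq.ne')]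
  · rw [pLaplacianForm_eq_rpow_mul A hp_top hg,
      pLaplacianForm_of_norm_eq_one A hp_top (norm_inv_norm_smul hg)]
    refine mul_nonpos_of_nonneg_of_nonpos (by positivity) ?_
    have := quadForm_le_lamMax A (norm_inv_norm_smul hg)
    nlinarith

lemma dominativeForm_nonpos (hn : 0 < n) (hp : 2 ≤ p) (hA : ∀ g : E, pLaplacianForm p A g ≤ 0) :
    dominativeForm p A ≤ 0 := by
  rcases eq_or_ne p ⊤ with rfl | hp_top
  · simp only [pLaplacianForm, dominativeForm, if_true] at hA ⊢
    simpa using mul_lamMax_le A hn zero_le_one fun z _ => (one_mul (quadForm A z)).trans_le (hA z)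
  have hq : 2 ≤ p.toReal := by simpa using ENNReal.toReal_mono hp_top hp
  rw [dominativeForm, if_neg hp_top]
  have := mul_lamMax_le A hn (sub_nonneg.2 hq) (b := -A.trace) fun z hz => by
    linarith [pLaplacianForm_of_norm_eq_one A hp_top hz ▸ hA z]
  linarith

lemma forall_pLaplacianForm_nonpos_iff (hn : 0 < n) (hp : 2 ≤ p) :
    (∀ g : E, pLaplacianForm p A g ≤ 0) ↔ dominativeForm p A ≤ 0 :=
  ⟨dominativeForm_nonpos A hn hp, pLaplacianForm_nonpos A hp⟩

end Forms

section LinearPerturbation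

lemma ContinuousLinearMap.iteratedFDeriv_two_eq_zero {𝕜 F G : Type*} [NontriviallyNormedField 𝕜]
    [NormedAddCommGroup F] [NormedSpace 𝕜 F] [NormedAddCommGroup G] [NormedSpace 𝕜 G]
    (ℓ : F →L[𝕜] G) (x : F) : iteratedFDeriv 𝕜 2 ℓ x = 0 := by
  have hℓ : fderiv 𝕜 ℓ = fun _ => ℓ := funext fun _ => ℓ.fderiv
  ext m
  simp [iteratedFDeriv_two_apply, hℓ]

variable {u : EuclideanSpace ℝ (Fin n) → ℝ} {x : EuclideanSpace ℝ (Fin n)}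

lemma hess_add_continuousLinearMap (hu : ContDiffAt ℝ 2 u x) (ℓ : E →L[ℝ] ℝ) :
    hess (fun y => u y + ℓ y) x = hess u x := by
  ext i j
  simp [hess, fun_iteratedFDeriv_add_apply hu ℓ.contDiff.contDiffAt,
    ℓ.iteratedFDeriv_two_eq_zero]

lemma gradient_add_inner (hu : DifferentiableAt ℝ u x) (a : E) :
    gradient (fun y => u y + inner ℝ a y) x = gradient u x + a := by
  refine HasGradientAt.gradient ?_
  rw [hasGradientAt_iff_hasFDerivAt, map_add]
  exact hu.hasGradientAt.hasFDerivAt.add (innerSL ℝ a).hasFDerivAt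

lemma DeltaOp_add_linear (p : ℝ≥0∞) (hu : ContDiffAt ℝ 2 u x) (a : E) :
    DeltaOp p (fun y => u y + ∑ i, a i * y i) x
      = pLaplacianForm p (hess u x) (gradient u x + a) := by
  have hlin : ∀ y : E, ∑ i, a i * y i = inner ℝ a y := fun y => by
    simp [PiLp.inner_apply, mul_comm]
  have hhess := hess_add_continuousLinearMap hu (innerSL ℝ a)
  simp only [innerSL_apply_apply] at hhess
  simp only [hlin]
  rw [DeltaOp_eq_pLaplacianForm, gradient_add_inner (hu.differentiableAt two_ne_zero) a, hhess]

end LinearPerturbation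

end

/-- Theorem 1 (ii), (a) ⇔ (d). -/
theorem stmt_9 {n : ℕ} (hn : 2 ≤ n) (p : ℝ≥0∞) (hp : 2 ≤ p)
    (Ω : Set (EuclideanSpace ℝ (Fin n))) (hΩ : IsOpen Ω)
    (u : EuclideanSpace ℝ (Fin n) → ℝ) (hu : ContDiffOn ℝ 2 u Ω) :
    (∀ a : EuclideanSpace ℝ (Fin n), ∀ x ∈ Ω,
        DeltaOp p (fun y => u y + ∑ i, a i * y i) x ≤ 0) ↔
    (∀ x ∈ Ω, Dop p u x ≤ 0) := by
  have pointwise : ∀ x ∈ Ω,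
      (∀ a : EuclideanSpace ℝ (Fin n), DeltaOp p (fun y => u y + ∑ i, a i * y i) x ≤ 0) ↔
        Dop p u x ≤ 0 := by
    intro x hx
    have hux := hu.contDiffAt (hΩ.mem_nhds hx)
    rw [Dop_eq_dominativeForm, ← forall_pLaplacianForm_nonpos_iff _ (by omega) hp]
    simp only [DeltaOp_add_linear p hux]
    exact ⟨fun h g => by simpa using h (g - gradient u x), fun h a => h _⟩
  exact ⟨fun h x hx => (pointwise x hx).1 fun a => h a x hx,
    fun h a x hx => (pointwise x hx).2 (h x hx) a⟩
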